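/- arXiv:1211.5669 — 4 statements merged into one kernel-verified Lean document; each statement's English description precedes it below -/
import Mathlib

section
/- Let η_0 < η_1 < ... < η_l be distinct reals with l ≥ 3, and let ξ_0 < ... < ξ_k be distinct reals. Suppose d_{m,ℓ} ∈ ℝ (0 ≤ m ≤ k, 0 ≤ ℓ ≤ l) satisfy: (i) for each ℓ with 2 ≤ ℓ ≤ l-2, Σ_{m=0}^{k} d_{m,ℓ}(x - ξ_m)^3 = 0 as a polynomial in x; and (ii) for each m with 0 ≤ m ≤ k, Σ_{ℓ=0}^{l} d_{m,ℓ}(y - η_ℓ)^3 = 0 as a polynomial in y. Then for every ℓ ∈ {0, 1, l-1, l}, Σ_{m=0}^{k} d_{m,ℓ}(x - ξ_m)^3 = 0 as a polynomial in x. -/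
/-!
Fix `x` and put `c ℓ = ∑ₘ d m ℓ (x - ξ m)³`. Multiplying (ii) by `(x - ξ m)³` and summing over
`m` gives `∑ₗ c ℓ (y - η ℓ)³ = 0` for all `y`, and (i) says `c ℓ = 0` off the four boundary
indices. Translates `(y - a)³` of at most four distinct nodes are linearly independent: their
vanishing combination has vanishing moments `∑ cᵢ aᵢʲ`, `j ≤ 3`, and the Vandermonde matrix of
distinct nodes is invertible. Hence the four boundary `c ℓ` vanish too.
-/

open Finset

lemma sum_mul_pow_eq_zero_of_forall_sum_mul_sub_pow_three_eq_zero {K ι : Type*} [Field K]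
    [CharZero K] {s : Finset ι} {c a : ι → K}
    (h : ∀ y, ∑ i ∈ s, c i * (y - a i) ^ 3 = 0) : ∀ j ≤ 3, ∑ i ∈ s, c i * a i ^ j = 0 := by
  set M : ℕ → K := fun j => ∑ i ∈ s, c i * a i ^ j with hM
  have expand : ∀ y, ∑ i ∈ s, c i * (y - a i) ^ 3
      = y ^ 3 * M 0 - 3 * y ^ 2 * M 1 + 3 * y * M 2 - M 3 := by
    intro y
    simp only [hM, mul_sum, ← sum_sub_distrib, ← sum_add_distrib]
    exact sum_congr rfl fun i _ => by ring
  have h0 := (expand 0).symm.trans (h 0)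
  have h1 := (expand 1).symm.trans (h 1)
  have hm1 := (expand (-1)).symm.trans (h (-1))
  have h2 := (expand 2).symm.trans (h 2)
  intro j hj
  interval_cases j
  · linear_combination (1 / 6 : K) * h2 - (1 / 2 : K) * h1 - (1 / 6 : K) * hm1 + (1 / 2 : K) * h0
  · linear_combination (-1 / 6 : K) * h1 - (1 / 6 : K) * hm1 + (1 / 3 : K) * h0
  · linear_combination (1 / 3 : K) * h1 - (1 / 9 : K) * hm1 - (1 / 18 : K) * h2 - (1 / 6 : K) * h0
  · linear_combination -h0

lemma Finset.eq_zero_of_forall_sum_mul_pow_eq_zero {R ι : Type*} [CommRing R] [IsDomain R]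
    {s : Finset ι} {c a : ι → R} {n : ℕ} (hs : #s ≤ n) (ha : Set.InjOn a s)
    (h : ∀ j < n, ∑ i ∈ s, c i * a i ^ j = 0) : ∀ i ∈ s, c i = 0 := by
  let e := s.equivFin
  have hinj : Function.Injective fun k => a (e.symm k) :=
    fun k k' hk => e.symm.injective (Subtype.val_injective (ha (e.symm k).2 (e.symm k').2 hk))
  have hzero : (fun k => c (e.symm k)) = 0 := by
    refine Matrix.eq_zero_of_forall_pow_sum_mul_pow_eq_zero hinj fun j => ?_
    rw [e.symm.sum_comp (fun i : s => c i * a i ^ (j : ℕ)), sum_coe_sort s (fun i => c i * a i ^ (j : ℕ))]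
    exact h j (j.2.trans_le hs)
  intro i hi
  simpa using congrFun hzero (e ⟨i, hi⟩)

lemma Finset.eq_zero_of_forall_sum_mul_sub_pow_three_eq_zero {K ι : Type*} [Field K] [CharZero K]
    {s : Finset ι} {c a : ι → K} (hs : #s ≤ 4) (ha : Set.InjOn a s)
    (h : ∀ y, ∑ i ∈ s, c i * (y - a i) ^ 3 = 0) : ∀ i ∈ s, c i = 0 :=
  s.eq_zero_of_forall_sum_mul_pow_eq_zero hs ha fun j hj =>
    sum_mul_pow_eq_zero_of_forall_sum_mul_sub_pow_three_eq_zero h j (by omega)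

lemma card_filter_lt_two_or_sub_two_lt_le_four (l : ℕ) :
    #{j : Fin (l + 1) | (j : ℕ) < 2 ∨ l - 2 < j} ≤ 4 :=
  calc #{j : Fin (l + 1) | (j : ℕ) < 2 ∨ l - 2 < j}
      ≤ #(range 2 ∪ Icc (l - 1) l) :=
        card_le_card_of_injOn Fin.val (fun j hj => by simp at hj ⊢; omega)
          Fin.val_injective.injOn
    _ ≤ #(range 2) + #(Icc (l - 1) l) := card_union_le _ _
    _ ≤ 4 := by simp; omega

theorem stmt2_general (l k : ℕ)
    (η : Fin (l + 1) → ℝ) (hη : StrictMono η)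
    (ξ : Fin (k + 1) → ℝ)
    (d : Fin (k + 1) → Fin (l + 1) → ℝ)
    (hi : ∀ ℓ : Fin (l + 1), 2 ≤ (ℓ : ℕ) → (ℓ : ℕ) ≤ l - 2 →
      ∀ x : ℝ, ∑ m : Fin (k + 1), d m ℓ * (x - ξ m) ^ 3 = 0)
    (hii : ∀ m : Fin (k + 1), ∀ y : ℝ,
      ∑ ℓ : Fin (l + 1), d m ℓ * (y - η ℓ) ^ 3 = 0) :
    ∀ ℓ : Fin (l + 1), ((ℓ : ℕ) = 0 ∨ (ℓ : ℕ) = 1 ∨ (ℓ : ℕ) = l - 1 ∨ (ℓ : ℕ) = l) →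
      ∀ x : ℝ, ∑ m : Fin (k + 1), d m ℓ * (x - ξ m) ^ 3 = 0 := by
  intro ℓ hℓ x
  set c : Fin (l + 1) → ℝ := fun j => ∑ m, d m j * (x - ξ m) ^ 3
  have hc : ∀ y, ∑ j, c j * (y - η j) ^ 3 = 0 := fun y =>
    calc ∑ j, c j * (y - η j) ^ 3 = ∑ m, (x - ξ m) ^ 3 * ∑ j, d m j * (y - η j) ^ 3 := by
          simp only [c, sum_mul, mul_sum]
          rw [sum_comm]
          exact sum_congr rfl fun m _ => sum_congr rfl fun j _ => by ring
      _ = 0 := by simp [hii]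
  have hboundary : ∀ y, ∑ j ∈ {j : Fin (l + 1) | (j : ℕ) < 2 ∨ l - 2 < j}, c j * (y - η j) ^ 3 = 0 := by
    intro y
    rw [sum_filter_of_ne fun j _ hj => ?_, hc y]
    by_contra! hint
    exact left_ne_zero_of_mul hj (hi j hint.1 hint.2 x)
  exact eq_zero_of_forall_sum_mul_sub_pow_three_eq_zero (card_filter_lt_two_or_sub_two_lt_le_four l)
    hη.injective.injOn hboundary ℓ (by simp; omega)

theorem stmt2 (l k : ℕ) (hl : 3 ≤ l)
    (η : Fin (l + 1) → ℝ) (hη : StrictMono η)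
    (ξ : Fin (k + 1) → ℝ) (hξ : StrictMono ξ)
    (d : Fin (k + 1) → Fin (l + 1) → ℝ)
    (hi : ∀ ℓ : Fin (l + 1), 2 ≤ (ℓ : ℕ) → (ℓ : ℕ) ≤ l - 2 →
      ∀ x : ℝ, ∑ m : Fin (k + 1), d m ℓ * (x - ξ m) ^ 3 = 0)
    (hii : ∀ m : Fin (k + 1), ∀ y : ℝ,
      ∑ ℓ : Fin (l + 1), d m ℓ * (y - η ℓ) ^ 3 = 0) :
    ∀ ℓ : Fin (l + 1), ((ℓ : ℕ) = 0 ∨ (ℓ : ℕ) = 1 ∨ (ℓ : ℕ) = l - 1 ∨ (ℓ : ℕ) = l) →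
      ∀ x : ℝ, ∑ m : Fin (k + 1), d m ℓ * (x - ξ m) ^ 3 = 0 :=
  stmt2_general l k η hη ξ d hi hii
end

section
/- Let p_0, p_1, p_2, p_3 be bicubic polynomials arranged cyclically around a vertex (ξ*, η*), with p_1 − p_0 = γ_2(η)(ξ − ξ*)^3, p_2 − p_1 = μ_1(ξ)(η − η*)^3, p_3 − p_2 = −γ_1(η)(ξ − ξ*)^3, p_0 − p_3 = −μ_2(ξ)(η − η*)^3 for cubic polynomials γ_1, γ_2, μ_1, μ_2. Then there exists d ∈ ℝ with γ_1(η) − γ_2(η) = d(η − η*)^3 and μ_1(ξ) − μ_2(ξ) = d(ξ − ξ*)^3. -/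
/-!
Adding the four edge relations around the vertex makes the `p`'s cancel and leaves
`(γ₁ - γ₂)(ξ - ξ*)³ = (μ₁ - μ₂)(η - η*)³`. Reading off the `(ξ - ξ*)³`-coefficient, i.e. the
coefficient of `ξ³`, gives `γ₁ - γ₂ = d (η - η*)³` with `d` the `ξ³`-coefficient of `μ₁ - μ₂`;
substituting back and cancelling `(η - η*)³` gives `μ₁ - μ₂ = d (ξ - ξ*)³`.
-/

open Polynomial

/-- Bidegree at most (3,3) for a bivariate polynomial represented as a
polynomial in ξ with coefficients that are polynomials in η. -/
def BidegLE33 (p : Polynomial (Polynomial ℝ)) : Prop :=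
  p.natDegree ≤ 3 ∧ ∀ i : ℕ, (p.coeff i).natDegree ≤ 3

theorem coeff_X_sub_C_pow_self {R : Type*} [CommRing R] [Nontrivial R] (c : R) (n : ℕ) :
    ((X - C c) ^ n).coeff n = 1 := by
  have h := ((monic_X_sub_C c).pow n).coeff_natDegree
  rwa [(monic_X_sub_C c).natDegree_pow, natDegree_X_sub_C, mul_one] at h

theorem exists_eq_C_mul_of_C_mul_X_sub_C_pow_eq {R : Type*} [CommRing R] [IsDomain R]
    {a b : R[X]} {x y : R} {n : ℕ}
    (h : C a * (X - C (C x)) ^ n = b.map C * C ((X - C y) ^ n)) :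
    ∃ d : R, a = C d * (X - C y) ^ n ∧ b = C d * (X - C x) ^ n := by
  have ha : a = C (b.coeff n) * (X - C y) ^ n := by
    simpa only [coeff_C_mul, coeff_mul_C, coeff_map, coeff_X_sub_C_pow_self, mul_one] using
      congrArg (coeff · n) h
  refine ⟨b.coeff n, ha, map_injective C C_injective ?_⟩
  refine mul_right_cancel₀ (C_ne_zero.mpr (pow_ne_zero n (X_sub_C_ne_zero y))) ?_
  rw [← h, ha]
  simp only [Polynomial.map_mul, Polynomial.map_pow, Polynomial.map_sub, map_X, map_C, map_mul]
  ring

theorem stmt7_general (p₀ p₁ p₂ p₃ : Polynomial (Polynomial ℝ))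
    (γ₁ γ₂ μ₁ μ₂ : Polynomial ℝ)
    (ξs ηs : ℝ)
    (h1 : p₁ - p₀ = Polynomial.C γ₂ * (X - Polynomial.C (Polynomial.C ξs)) ^ 3)
    (h2 : p₂ - p₁ = μ₁.map Polynomial.C * Polynomial.C ((X - Polynomial.C ηs) ^ 3))
    (h3 : p₃ - p₂ = -(Polynomial.C γ₁ * (X - Polynomial.C (Polynomial.C ξs)) ^ 3))
    (h4 : p₀ - p₃ = -(μ₂.map Polynomial.C * Polynomial.C ((X - Polynomial.C ηs) ^ 3))) :
    ∃ d : ℝ, γ₁ - γ₂ = C d * (X - C ηs) ^ 3 ∧ μ₁ - μ₂ = C d * (X - C ξs) ^ 3 := by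
  apply exists_eq_C_mul_of_C_mul_X_sub_C_pow_eq
  rw [Polynomial.map_sub, map_sub]
  linear_combination h1 + h2 + h3 + h4

theorem stmt7 (p₀ p₁ p₂ p₃ : Polynomial (Polynomial ℝ))
    (hp₀ : BidegLE33 p₀) (hp₁ : BidegLE33 p₁) (hp₂ : BidegLE33 p₂) (hp₃ : BidegLE33 p₃)
    (γ₁ γ₂ μ₁ μ₂ : Polynomial ℝ)
    (hγ₁ : γ₁.natDegree ≤ 3) (hγ₂ : γ₂.natDegree ≤ 3)
    (hμ₁ : μ₁.natDegree ≤ 3) (hμ₂ : μ₂.natDegree ≤ 3)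
    (ξs ηs : ℝ)
    (h1 : p₁ - p₀ = Polynomial.C γ₂ * (X - Polynomial.C (Polynomial.C ξs)) ^ 3)
    (h2 : p₂ - p₁ = μ₁.map Polynomial.C * Polynomial.C ((X - Polynomial.C ηs) ^ 3))
    (h3 : p₃ - p₂ = -(Polynomial.C γ₁ * (X - Polynomial.C (Polynomial.C ξs)) ^ 3))
    (h4 : p₀ - p₃ = -(μ₂.map Polynomial.C * Polynomial.C ((X - Polynomial.C ηs) ^ 3))) :
    ∃ d : ℝ, γ₁ - γ₂ = C d * (X - C ηs) ^ 3 ∧ μ₁ - μ₂ = C d * (X - C ξs) ^ 3 :=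
  stmt7_general p₀ p₁ p₂ p₃ γ₁ γ₂ μ₁ μ₂ ξs ηs h1 h2 h3 h4
end

section
/- Let S be a finite set (of 'segments') and for each G ∈ S let V(G) be a finite set (of 'vertices'). The following are equivalent: (1) there exists an ordering G_1, ..., G_n of S such that for each j, the set V(G_j) \ ⋃_{i<j} V(G_i) has at least 4 elements; (2) every nonempty subset S' ⊆ S contains some G ∈ S' such that V(G) \ ⋃_{H ∈ S', H ≠ G} V(H) has at least 4 elements. -/
/-!
If `G₁, …, Gₙ` is an ordering in which every `Gⱼ` has at least `k` vertices outside the earlier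
segments, then in any nonempty `S' ⊆ S` the segment of largest index has those `k` vertices
outside every other member of `S'`. Conversely, a segment with `k` private vertices in the whole
of `S` can be placed last, and the rest of `S` ordered recursively.
-/

open Finset

section PeelingOrder

variable {α β : Type*} [DecidableEq α] (V : β → Finset α) (k : ℕ)

def IsPeelingOrder {n : ℕ} (G : Fin n → β) : Prop :=
  ∀ j, k ≤ (V (G j) \ (univ.filter fun i => i < j).biUnion fun i => V (G i)).card

variable {V k}

theorem IsPeelingOrder.exists_private [DecidableEq β] {n : ℕ} {G : Fin n → β}
    (hG : IsPeelingOrder V k G) {S' : Finset β} (hS' : S' ⊆ univ.image G)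
    (hne : S'.Nonempty) : ∃ H ∈ S', k ≤ (V H \ (S'.erase H).biUnion V).card := by
  set T := univ.filter fun i => G i ∈ S'
  have hT : T.Nonempty := by
    obtain ⟨H, hH⟩ := hne
    obtain ⟨i, -, rfl⟩ := mem_image.1 (hS' hH)
    exact ⟨i, by simpa [T] using hH⟩
  set j := T.max' hT
  have hj : G j ∈ S' := by simpa [T] using T.max'_mem hT
  have hsub : (S'.erase (G j)).biUnion V ⊆
      (univ.filter fun i => i < j).biUnion fun i => V (G i) := by
    refine biUnion_subset.2 fun H hH => ?_
    obtain ⟨hHj, hHS'⟩ := mem_erase.1 hH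
    obtain ⟨i, -, rfl⟩ := mem_image.1 (hS' hHS')
    have hij : i < j := (T.le_max' i (by simpa [T] using hHS')).lt_of_ne fun h => hHj (by rw [h])
    exact subset_biUnion_of_mem (fun i => V (G i)) (by simpa using hij)
  exact ⟨G j, hj, (hG j).trans (card_le_card (sdiff_subset_sdiff le_rfl hsub))⟩

theorem IsPeelingOrder.snoc {m : ℕ} {G : Fin m → β} (hG : IsPeelingOrder V k G) {x : β}
    (hx : k ≤ (V x \ univ.biUnion fun i => V (G i)).card) :
    IsPeelingOrder V k (Fin.snoc G x : Fin (m + 1) → β) := by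
  intro j
  rw [filter_gt_eq_Iio]
  induction j using Fin.lastCases with
  | last =>
    rw [Fin.Iio_last_eq_map, map_eq_image, image_biUnion]
    simpa using hx
  | cast j =>
    rw [Fin.Iio_castSucc, map_eq_image, image_biUnion]
    simpa [filter_gt_eq_Iio] using hG j

theorem exists_isPeelingOrder [DecidableEq β] (S : Finset β)
    (h : ∀ S' ⊆ S, S'.Nonempty → ∃ H ∈ S', k ≤ (V H \ (S'.erase H).biUnion V).card) :
    ∃ (n : ℕ) (G : Fin n → β),
      Function.Injective G ∧ univ.image G = S ∧ IsPeelingOrder V k G := by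
  induction S using Finset.strongInduction with
  | _ S ih =>
  rcases S.eq_empty_or_nonempty with rfl | hS
  · exact ⟨0, Fin.elim0, Function.injective_of_subsingleton _, by simp, fun j => j.elim0⟩
  obtain ⟨x, hxS, hx⟩ := h S subset_rfl hS
  obtain ⟨n, G, hinj, himg, hG⟩ :=
    ih (S.erase x) (erase_ssubset hxS) fun S' hS' => h S' (hS'.trans (erase_subset x S))
  have hrange : Set.range G = ↑(S.erase x) := by
    rw [← himg, coe_image, coe_univ, Set.image_univ]
  refine ⟨n + 1, Fin.snoc G x, Fin.snoc_injective_of_injective hinj ?_, ?_, hG.snoc ?_⟩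
  · simp [hrange]
  · apply coe_injective
    rw [coe_image, coe_univ, Set.image_univ, Fin.range_snoc, hrange, ← coe_insert,
      insert_erase hxS]
  · rwa [← image_biUnion, himg]

end PeelingOrder

theorem stmt10 {α β : Type} [DecidableEq α] [DecidableEq β]
    (S : Finset β) (V : β → Finset α) :
    (∃ G : Fin S.card → β, Function.Injective G ∧ (∀ j, G j ∈ S) ∧
        ∀ j : Fin S.card,
          4 ≤ (V (G j) \ (Finset.univ.filter fun i => i < j).biUnion fun i => V (G i)).card) ↔
      (∀ S' ⊆ S, S'.Nonempty →
        ∃ G ∈ S', 4 ≤ (V G \ (S'.erase G).biUnion V).card) := by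
  constructor
  · rintro ⟨G, hinj, hmem, (hG : IsPeelingOrder V 4 G)⟩ S' hS' hne
    have himg : univ.image G = S := eq_of_subset_of_card_le (image_subset_iff.2 fun j _ => hmem j)
      (by rw [card_image_of_injective _ hinj, card_fin])
    exact hG.exists_private (hS'.trans himg.ge) hne
  · intro h
    obtain ⟨n, G, hinj, himg, hG⟩ := exists_isPeelingOrder S h
    obtain rfl : n = S.card := by rw [← himg, card_image_of_injective _ hinj, card_fin]
    exact ⟨G, hinj, fun j => himg ▸ mem_image_of_mem G (mem_univ j), hG⟩
end

section
/- Generalization of the previous statement for arbitrary threshold: Let S be a finite set, V : S → Finset α, and c ∈ ℕ. There exists an enumeration G_1, ..., G_n of S with |V(G_j) \ ⋃_{i<j} V(G_i)| ≥ c for all j, if and only if every nonempty subset S' ⊆ S contains an element G with |V(G) \ ⋃_{H ∈ S' \ {G}} V(H)| ≥ c. -/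
/-!
In an admissible enumeration, the member of a subset `S'` that comes last has every other member of
`S'` among its predecessors, so its new vertices avoid the rest of `S'`. Conversely, an element `g`
of `S` with at least `c` vertices outside all the others can be listed last, after an enumeration
of `S.erase g` obtained by induction.
-/

open Finset Function

theorem exists_mem_erase_subset_image_Iio {β : Type*} [DecidableEq β] {n : ℕ} {G : Fin n → β}
    {T : Finset β} (hT : T ⊆ univ.image G) (hne : T.Nonempty) :
    ∃ j, G j ∈ T ∧ T.erase (G j) ⊆ (Iio j).image G := by
  set I := univ.filter fun i => G i ∈ T
  have hI : I.Nonempty := by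
    obtain ⟨x, hx⟩ := hne
    obtain ⟨i, -, rfl⟩ := mem_image.1 (hT hx)
    exact ⟨i, mem_filter.2 ⟨mem_univ i, hx⟩⟩
  refine ⟨I.max' hI, (mem_filter.1 (I.max'_mem hI)).2, fun x hx => ?_⟩
  obtain ⟨hxj, hxT⟩ := mem_erase.1 hx
  obtain ⟨i, -, rfl⟩ := mem_image.1 (hT hxT)
  have hij : i ≠ I.max' hI := fun h => hxj (congrArg G h)
  have hle : i ≤ I.max' hI := I.le_max' i (mem_filter.2 ⟨mem_univ i, hxT⟩)
  exact mem_image_of_mem G (mem_Iio.2 (hle.lt_of_ne hij))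

theorem Finset.image_univ_eq_of_injective {β : Type*} [DecidableEq β] {S : Finset β}
    {G : Fin S.card → β} (hG : Injective G) (hGS : ∀ j, G j ∈ S) : univ.image G = S :=
  eq_of_subset_of_card_le (image_subset_iff.2 fun j _ => hGS j)
    (by rw [card_image_of_injective _ hG, card_univ, Fintype.card_fin])

section

variable {α β : Type*} [DecidableEq α] (V : β → Finset α) (c : ℕ)

def AddsAtLeast {n : ℕ} (G : Fin n → β) : Prop :=
  ∀ j, c ≤ (V (G j) \ (Iio j).biUnion fun i => V (G i)).card

variable {V c}

theorem AddsAtLeast.snoc {n : ℕ} {F : Fin n → β} {g : β} (hF : AddsAtLeast V c F)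
    (hg : c ≤ (V g \ univ.biUnion fun i => V (F i)).card) :
    AddsAtLeast V c (Fin.snoc F g : Fin (n + 1) → β) := by
  intro j
  induction j using Fin.lastCases with
  | last =>
    rw [Fin.snoc_last, Fin.Iio_last_eq_map, map_eq_image, image_biUnion]
    simpa only [Fin.coe_castSuccEmb, comp_apply, Fin.snoc_castSucc] using hg
  | cast j =>
    rw [Fin.snoc_castSucc, ← Fin.map_castSuccEmb_Iio, map_eq_image, image_biUnion]
    simpa only [Fin.coe_castSuccEmb, comp_apply, Fin.snoc_castSucc] using hF j

variable [DecidableEq β]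

theorem AddsAtLeast.exists_mem {n : ℕ} {G : Fin n → β} (h : AddsAtLeast V c G) {T : Finset β}
    (hT : T ⊆ univ.image G) (hne : T.Nonempty) :
    ∃ g ∈ T, c ≤ (V g \ (T.erase g).biUnion V).card := by
  obtain ⟨j, hjT, hsub⟩ := exists_mem_erase_subset_image_Iio hT hne
  refine ⟨G j, hjT, (h j).trans (card_le_card (sdiff_le_sdiff_left ?_))⟩
  exact (biUnion_subset_biUnion_of_subset_left V hsub).trans_eq image_biUnion

theorem exists_addsAtLeast_of_forall_exists {S : Finset β}
    (hS : ∀ T ⊆ S, T.Nonempty → ∃ g ∈ T, c ≤ (V g \ (T.erase g).biUnion V).card) :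
    ∃ G : Fin S.card → β, Injective G ∧ (∀ j, G j ∈ S) ∧ AddsAtLeast V c G := by
  generalize hn : S.card = n
  induction n generalizing S with
  | zero => exact ⟨finZeroElim, fun i => i.elim0, fun i => i.elim0, fun i => i.elim0⟩
  | succ n ih =>
    obtain ⟨g, hgS, hg⟩ := hS S Subset.rfl (card_pos.1 (by omega))
    obtain ⟨F, hF, hFS, hFc⟩ := ih (fun T hT => hS T (hT.trans (erase_subset g S)))
      (by rw [card_erase_of_mem hgS, hn]; rfl)
    have hgF : g ∉ Set.range F := by
      rintro ⟨i, rfl⟩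
      exact notMem_erase _ S (hFS i)
    refine ⟨Fin.snoc F g, Fin.snoc_injective_of_injective hF hgF, fun j => ?_,
      hFc.snoc (hg.trans (card_le_card (sdiff_le_sdiff_left ?_)))⟩
    · induction j using Fin.lastCases with
      | last => simpa using hgS
      | cast j => simpa using mem_of_mem_erase (hFS j)
    · exact biUnion_subset_iff_forall_subset.2 fun i _ => subset_biUnion_of_mem V (hFS i)

end

theorem stmt11 {α β : Type} [DecidableEq α] [DecidableEq β]
    (S : Finset β) (V : β → Finset α) (c : ℕ) :
    (∃ G : Fin S.card → β, Function.Injective G ∧ (∀ j, G j ∈ S) ∧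
        ∀ j : Fin S.card,
          c ≤ (V (G j) \ (Finset.univ.filter fun i => i < j).biUnion fun i => V (G i)).card) ↔
      (∀ S' ⊆ S, S'.Nonempty →
        ∃ G ∈ S', c ≤ (V G \ (S'.erase G).biUnion V).card) := by
  simp only [filter_gt_eq_Iio]
  constructor
  · rintro ⟨G, hG, hGS, hGc⟩ T hTS hne
    exact AddsAtLeast.exists_mem hGc (hTS.trans (image_univ_eq_of_injective hG hGS).ge) hne
  · exact exists_addsAtLeast_of_forall_exists
end
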